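/- arXiv:2512.18833 — 2 statements merged into one kernel-verified Lean document; each statement's English description precedes it below -/
import Mathlib

section
/- One-step dissipation bound for the multilayer update: let x_k, y_k ∈ ℝ^d and r_k ∈ ℝ \ {0} for k = 1,…,L, and set X = (1/L)∑_k (x_k + r_k(y_k − x_k)), Y = (1/L)∑_k (y_k + r_k(x_k − y_k)). Then ∑_k (‖x_k‖² + ‖y_k‖²) − L‖X‖² − L‖Y‖² ≥ 2 ∑_k r_k² (r_k⁻¹ − 1) ‖y_k − x_k‖². -/
/-!
Each layer k maps the pair (x_k, y_k) to (v_k, w_k) = (x_k + r_k (y_k - x_k), y_k + r_k (x_k - y_k)),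
and expanding the squares gives the exact identity
‖v_k‖² + ‖w_k‖² = ‖x_k‖² + ‖y_k‖² - 2 r_k (1 - r_k) ‖y_k - x_k‖².
Since X and Y are the averages of the v_k and w_k, Jensen's inequality for the convex function ‖·‖²
gives L ‖X‖² ≤ ∑ ‖v_k‖² and L ‖Y‖² ≤ ∑ ‖w_k‖²; summing the identity over k and using
r² (r⁻¹ - 1) = r (1 - r) yields the bound.
-/

open Finset

section Average

variable {ι E : Type*} [SeminormedAddCommGroup E]

theorem norm_sum_sq_le_card_mul_sum_norm_sq (s : Finset ι) (u : ι → E) :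
    ‖∑ i ∈ s, u i‖ ^ 2 ≤ #s * ∑ i ∈ s, ‖u i‖ ^ 2 :=
  (pow_le_pow_left₀ (norm_nonneg _) (norm_sum_le s u) 2).trans (sq_sum_le_card_mul_sum_sq ..)

theorem card_mul_norm_inv_card_smul_sum_sq_le [NormedSpace ℝ E] (s : Finset ι) (u : ι → E) :
    #s * ‖(#s : ℝ)⁻¹ • ∑ i ∈ s, u i‖ ^ 2 ≤ ∑ i ∈ s, ‖u i‖ ^ 2 := by
  rcases s.eq_empty_or_nonempty with rfl | hs
  · simp
  have hcard : (0 : ℝ) < #s := by exact_mod_cast hs.card_pos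
  calc (#s : ℝ) * ‖(#s : ℝ)⁻¹ • ∑ i ∈ s, u i‖ ^ 2
      = (#s : ℝ)⁻¹ * ‖∑ i ∈ s, u i‖ ^ 2 := by
        rw [norm_smul, mul_pow, norm_inv, Real.norm_natCast]
        field_simp
    _ ≤ (#s : ℝ)⁻¹ * (#s * ∑ i ∈ s, ‖u i‖ ^ 2) := by
        gcongr; exact norm_sum_sq_le_card_mul_sum_norm_sq s u
    _ = ∑ i ∈ s, ‖u i‖ ^ 2 := inv_mul_cancel_left₀ hcard.ne' _

end Average

theorem norm_add_smul_sub_sq_add_norm_add_smul_sub_sq {F : Type*} [NormedAddCommGroup F]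
    [InnerProductSpace ℝ F] (x y : F) (r : ℝ) :
    ‖x + r • (y - x)‖ ^ 2 + ‖y + r • (x - y)‖ ^ 2
      = ‖x‖ ^ 2 + ‖y‖ ^ 2 - 2 * (r * (1 - r)) * ‖y - x‖ ^ 2 := by
  have hcross : inner ℝ x (y - x) + inner ℝ y (x - y) = -‖y - x‖ ^ 2 := by
    rw [norm_sub_sq_real, inner_sub_right, inner_sub_right, real_inner_comm y x,
      real_inner_self_eq_norm_sq, real_inner_self_eq_norm_sq]
    ring
  rw [norm_add_sq_real, norm_add_sq_real, norm_smul, norm_smul, real_inner_smul_right,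
    real_inner_smul_right, norm_sub_rev x y, mul_pow, Real.norm_eq_abs, sq_abs]
  linear_combination 2 * r * hcross

-- Also true at r = 0, where 0⁻¹ = 0 makes both sides vanish.
theorem sq_mul_inv_sub_one {K : Type*} [Field K] (r : K) : r ^ 2 * (r⁻¹ - 1) = r * (1 - r) := by
  rw [sq, mul_sub, mul_self_mul_inv]
  ring

theorem multilayer_dissipation_bound_general (d L : ℕ)
    (x y : Fin L → EuclideanSpace ℝ (Fin d)) (r : Fin L → ℝ)
    (X Y : EuclideanSpace ℝ (Fin d))
    (hX : X = ((L : ℝ)⁻¹) • ∑ k, (x k + r k • (y k - x k)))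
    (hY : Y = ((L : ℝ)⁻¹) • ∑ k, (y k + r k • (x k - y k))) :
    2 * ∑ k, (r k) ^ 2 * ((r k)⁻¹ - 1) * ‖y k - x k‖ ^ 2
      ≤ (∑ k, (‖x k‖ ^ 2 + ‖y k‖ ^ 2)) - (L : ℝ) * ‖X‖ ^ 2 - (L : ℝ) * ‖Y‖ ^ 2 := by
  have hJensenX := card_mul_norm_inv_card_smul_sum_sq_le univ fun k => x k + r k • (y k - x k)
  have hJensenY := card_mul_norm_inv_card_smul_sum_sq_le univ fun k => y k + r k • (x k - y k)
  rw [card_univ, Fintype.card_fin, ← hX] at hJensenX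
  rw [card_univ, Fintype.card_fin, ← hY] at hJensenY
  have hdissipation : 2 * ∑ k, (r k) ^ 2 * ((r k)⁻¹ - 1) * ‖y k - x k‖ ^ 2
      = ∑ k, (‖x k‖ ^ 2 + ‖y k‖ ^ 2)
        - ∑ k, ‖x k + r k • (y k - x k)‖ ^ 2 - ∑ k, ‖y k + r k • (x k - y k)‖ ^ 2 := by
    rw [mul_sum, ← sum_sub_distrib, ← sum_sub_distrib]
    refine sum_congr rfl fun k _ => ?_
    rw [sq_mul_inv_sub_one]
    linarith [norm_add_smul_sub_sq_add_norm_add_smul_sub_sq (x k) (y k) (r k)]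
  linarith

theorem multilayer_dissipation_bound (d L : ℕ) (hL : 1 ≤ L)
    (x y : Fin L → EuclideanSpace ℝ (Fin d)) (r : Fin L → ℝ)
    (hr : ∀ k, r k ≠ 0)
    (X Y : EuclideanSpace ℝ (Fin d))
    (hX : X = ((L : ℝ)⁻¹) • ∑ k, (x k + r k • (y k - x k)))
    (hY : Y = ((L : ℝ)⁻¹) • ∑ k, (y k + r k • (x k - y k))) :
    2 * ∑ k, (r k) ^ 2 * ((r k)⁻¹ - 1) * ‖y k - x k‖ ^ 2
      ≤ (∑ k, (‖x k‖ ^ 2 + ‖y k‖ ^ 2)) - (L : ℝ) * ‖X‖ ^ 2 - (L : ℝ) * ‖Y‖ ^ 2 :=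
  multilayer_dissipation_bound_general d L x y r X Y hX hY
end

section
/- If all r_k ∈ (0, 1] for k = 1,…,L, then the multilayer averaged update does not increase the sum of squared norms: with X = (1/L)∑_k (x_k + r_k(y_k − x_k)) and Y = (1/L)∑_k (y_k + r_k(x_k − y_k)), one has L‖X‖² + L‖Y‖² ≤ ∑_{k=1}^L (‖x_k‖² + ‖y_k‖²). -/
theorem multilayer_attractive_nonincreasing (d L : ℕ) (hL : 1 ≤ L)
    (x y : Fin L → EuclideanSpace ℝ (Fin d)) (r : Fin L → ℝ)
    (hr0 : ∀ k, 0 < r k) (hr1 : ∀ k, r k ≤ 1)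
    (X Y : EuclideanSpace ℝ (Fin d))
    (hX : X = ((L : ℝ)⁻¹) • ∑ k, (x k + r k • (y k - x k)))
    (hY : Y = ((L : ℝ)⁻¹) • ∑ k, (y k + r k • (x k - y k))) :
    (L : ℝ) * ‖X‖ ^ 2 + (L : ℝ) * ‖Y‖ ^ 2 ≤ ∑ k, (‖x k‖ ^ 2 + ‖y k‖ ^ 2) := by
  have hLpos : (0:ℝ) < L := by exact_mod_cast hL
  set v : Fin L → EuclideanSpace ℝ (Fin d) := fun k => x k + r k • (y k - x k) with hv
  set w : Fin L → EuclideanSpace ℝ (Fin d) := fun k => y k + r k • (x k - y k) with hw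
  -- L‖X‖² ≤ ∑ ‖v k‖², similarly for Y
  have key : ∀ (u : Fin L → EuclideanSpace ℝ (Fin d)),
      (L : ℝ) * ‖((L : ℝ)⁻¹) • ∑ k, u k‖ ^ 2 ≤ ∑ k, ‖u k‖ ^ 2 := by
    intro u
    have h1 : ‖∑ k, u k‖ ≤ ∑ k, ‖u k‖ := norm_sum_le _ _
    have h2 : (∑ k, ‖u k‖) ^ 2 ≤ (L : ℝ) * ∑ k, ‖u k‖ ^ 2 := by
      have := sq_sum_le_card_mul_sum_sq (s := Finset.univ) (f := fun k => ‖u k‖)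
      simpa using this
    have h3 : ‖∑ k, u k‖ ^ 2 ≤ (∑ k, ‖u k‖) ^ 2 := by
      apply pow_le_pow_left₀ (norm_nonneg _) h1
    rw [norm_smul]
    have : (L : ℝ) * (‖(L : ℝ)⁻¹‖ * ‖∑ k, u k‖) ^ 2
        = (L : ℝ)⁻¹ * ‖∑ k, u k‖ ^ 2 := by
      rw [Real.norm_eq_abs, abs_of_pos (by positivity)]
      field_simp
    rw [this]
    rw [inv_mul_le_iff₀ hLpos] at *
    nlinarith [sq_nonneg (‖∑ k, u k‖)]
  have hXle := key v
  have hYle := key w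
  rw [← hX] at hXle
  rw [← hY] at hYle
  have pt : ∀ k, ‖v k‖ ^ 2 + ‖w k‖ ^ 2 ≤ ‖x k‖ ^ 2 + ‖y k‖ ^ 2 := by
    intro k
    have hvk : v k = (1 - r k) • x k + r k • y k := by
      simp only [hv]; module
    have hwk : w k = (1 - r k) • y k + r k • x k := by
      simp only [hw]; module
    have h1r : 0 ≤ 1 - r k := by linarith [hr1 k]
    have hr := (hr0 k).le
    have hv1 : ‖v k‖ ≤ (1 - r k) * ‖x k‖ + r k * ‖y k‖ := by
      rw [hvk]
      refine (norm_add_le _ _).trans ?_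
      rw [norm_smul, norm_smul, Real.norm_eq_abs, Real.norm_eq_abs,
        abs_of_nonneg h1r, abs_of_nonneg hr]
    have hw1 : ‖w k‖ ≤ (1 - r k) * ‖y k‖ + r k * ‖x k‖ := by
      rw [hwk]
      refine (norm_add_le _ _).trans ?_
      rw [norm_smul, norm_smul, Real.norm_eq_abs, Real.norm_eq_abs,
        abs_of_nonneg h1r, abs_of_nonneg hr]
    nlinarith [norm_nonneg (v k), norm_nonneg (w k), norm_nonneg (x k),
      norm_nonneg (y k), sq_nonneg (‖x k‖ - ‖y k‖), sq_nonneg (r k),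
      mul_nonneg h1r hr]
  calc (L : ℝ) * ‖X‖ ^ 2 + (L : ℝ) * ‖Y‖ ^ 2 ≤ ∑ k, ‖v k‖ ^ 2 + ∑ k, ‖w k‖ ^ 2 :=
        add_le_add hXle hYle
    _ = ∑ k, (‖v k‖ ^ 2 + ‖w k‖ ^ 2) := (Finset.sum_add_distrib).symm
    _ ≤ ∑ k, (‖x k‖ ^ 2 + ‖y k‖ ^ 2) := Finset.sum_le_sum fun k _ => pt k
end
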